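/- Let Γ = (V,R) be an infinite graph and let N be an open normal subgroup of G_Γ with G_Γ/N ≅ C_2. Define the vertex width of N to be the least n ≥ 1 such that ⋂_{v∈U} ker(π_v) ⊆ N for some n-element subset U ⊆ V. Then N has vertex width n if and only if there exists an induced subgraph Γ_0 = (V_0,R_0) of Γ with |V_0| = n such that N contains the kernel of the coordinate projection π_{Γ_0} : G_Γ → G_{Γ_0}, and the image N̄ = π_{Γ_0}(N), which is a normal subgroup of G_{Γ_0} containing the product P of the p- and q-Sylow subgroups of G_{Γ_0}, satisfies that ξ_{Γ_0}(N̄) is exactly the even-parity subgroup {(g_v)_{v∈V_0} ∈ C_2^{V_0} : the number of v with g_v = −1 is even}. -/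

import Mathlib

open Function

noncomputable section

/-- A discrete group is a topological group. -/
instance (priority := 50) discreteTopologicalGroup (G : Type*) [Group G] [TopologicalSpace G]
    [DiscreteTopology G] : IsTopologicalGroup G where
  continuous_mul := continuous_of_discreteTopology
  continuous_inv := continuous_of_discreteTopology

/-- The sign epimorphism `τ : D_p → C_2 = {±1}` killing the rotations. -/
def dihedralSign (p : ℕ) : DihedralGroup p →* ℤˣ where
  toFun x := match x with
    | DihedralGroup.r _ => 1
    | DihedralGroup.sr _ => -1
  map_one' := rfl
  map_mul' a b := by cases a <;> cases b <;> rfl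

/-- `{±1}` acts on a commutative group by exponentiation (i.e. `-1` acts by inversion). -/
def unitsIntAut (A : Type*) [CommGroup A] : ℤˣ →* MulAut A where
  toFun u :=
    { toFun := fun x => x ^ (u : ℤ)
      invFun := fun x => x ^ (u : ℤ)
      left_inv := fun x => by rcases Int.units_eq_one_or u with h | h <;> simp [h]
      right_inv := fun x => by rcases Int.units_eq_one_or u with h | h <;> simp [h]
      map_mul' := fun x y => mul_zpow x y _ }
  map_one' := by ext x; simp
  map_mul' u v := by
    ext x
    rcases Int.units_eq_one_or u with h | h <;>
      rcases Int.units_eq_one_or v with h' | h' <;>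
        simp [h, h']

/-- The action of `D_p × D_p` on `C_q` given by `(x,y) · g = g^(τ(x)τ(y))`. -/
def Wact (p q : ℕ) : DihedralGroup p × DihedralGroup p →* MulAut (Multiplicative (ZMod q)) :=
  (unitsIntAut (Multiplicative (ZMod q))).comp
    (((dihedralSign p).comp (MonoidHom.fst _ _)) * ((dihedralSign p).comp (MonoidHom.snd _ _)))

/-- The group `W = C_q ⋊ (D_p × D_p)`. -/
abbrev Wgrp (p q : ℕ) : Type :=
  SemidirectProduct (Multiplicative (ZMod q)) (DihedralGroup p × DihedralGroup p) (Wact p q)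

/-- The quotient map `λ : W → D_p × D_p`. -/
abbrev lamW (p q : ℕ) : Wgrp p q →* DihedralGroup p × DihedralGroup p :=
  SemidirectProduct.rightHom

/-- The group `G_Γ ≤ D_p^V × W^R` associated to a graph `Γ = (V, R)`. -/
def GGamma (p q : ℕ) (V : Type*) (R : Set (V × V)) :
    Subgroup ((V → DihedralGroup p) × (R → Wgrp p q)) where
  carrier := {x | ∀ r : R,
    SemidirectProduct.rightHom (x.2 r) = (x.1 (r : V × V).1, x.1 (r : V × V).2)}
  one_mem' := by intro r; simp; rfl
  mul_mem' := by
    intro a b ha hb r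
    simp only [Set.mem_setOf_eq] at ha hb
    simp only [Prod.snd_mul, Pi.mul_apply, map_mul, Prod.fst_mul, ha r, hb r, Prod.mk_mul_mk]
  inv_mem' := by
    intro a ha r
    simp only [Set.mem_setOf_eq] at ha
    simp only [Prod.snd_inv, Pi.inv_apply, map_inv, Prod.fst_inv, ha r, Prod.inv_mk]

instance (n : ℕ) : TopologicalSpace (DihedralGroup n) := ⊥
instance (n : ℕ) : DiscreteTopology (DihedralGroup n) := ⟨rfl⟩
instance (p q : ℕ) : TopologicalSpace (Wgrp p q) := ⊥
instance (p q : ℕ) : DiscreteTopology (Wgrp p q) := ⟨rfl⟩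

variable (p q : ℕ) (V : Type*) (R : Set (V × V))

/-- The coordinate projection `π_v : G_Γ → D_p` at a vertex `v`. -/
def vProj (v : V) : ↥(GGamma p q V R) →* DihedralGroup p :=
  (Pi.evalMonoidHom (fun _ : V => DihedralGroup p) v).comp
    ((MonoidHom.fst _ _).comp (GGamma p q V R).subtype)

/-- The coordinate projection `π_r : G_Γ → W` at an edge `r`. -/
def eProj (r : R) : ↥(GGamma p q V R) →* Wgrp p q :=
  (Pi.evalMonoidHom (fun _ : R => Wgrp p q) r).comp
    ((MonoidHom.snd _ _).comp (GGamma p q V R).subtype)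

variable (I : Type*)

/-- The coordinate projection `π_v : G_Γ × C_2^I → D_p` at a vertex `v`. -/
def vProjK (v : V) : (↥(GGamma p q V R) × (I → ℤˣ)) →* DihedralGroup p :=
  (vProj p q V R v).comp (MonoidHom.fst _ _)

/-- The coordinate projection `π_r : G_Γ × C_2^I → W` at an edge `r`. -/
def eProjK (r : R) : (↥(GGamma p q V R) × (I → ℤˣ)) →* Wgrp p q :=
  (eProj p q V R r).comp (MonoidHom.fst _ _)

/-- The map `ξ_Γ : G_Γ → C_2^V`, `((a_v), (b_r)) ↦ (τ(a_v))_v`. -/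
def xiGamma : ↥(GGamma p q V R) →* (V → ℤˣ) :=
  Pi.monoidHom fun v => (dihedralSign p).comp (vProj p q V R v)

end
noncomputable section
variable (p q : ℕ) (V : Type*) (R : Set (V × V))

/-- The edge set of the induced subgraph on a set `V₀` of vertices. -/
def inducedR (V0 : Set V) : Set (↥V0 × ↥V0) := {e | ((e.1 : V), (e.2 : V)) ∈ R}

/-- The coordinate projection `π_{Γ₀} : G_Γ → G_{Γ₀}` onto the group of an induced
subgraph. -/
def projGGamma (V0 : Set V) :
    ↥(GGamma p q V R) →* ↥(GGamma p q ↥V0 (inducedR V R V0)) :=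
  MonoidHom.codRestrict
    ((MonoidHom.prod
      ((Pi.monoidHom fun v : ↥V0 =>
        Pi.evalMonoidHom (fun _ : V => DihedralGroup p) (v : V)).comp (MonoidHom.fst _ _))
      ((Pi.monoidHom fun e : inducedR V R V0 =>
        Pi.evalMonoidHom (fun _ : R => Wgrp p q)
          (⟨(((e : ↥V0 × ↥V0).1 : V), ((e : ↥V0 × ↥V0).2 : V)), e.2⟩ : R)).comp
        (MonoidHom.snd _ _))).comp (GGamma p q V R).subtype)
    (GGamma p q ↥V0 (inducedR V R V0))
    (fun x => by
      intro e
      exact x.2 ⟨(((e : ↥V0 × ↥V0).1 : V), ((e : ↥V0 × ↥V0).2 : V)), e.2⟩)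
end

/-!
A character `ψ : G_Γ → {±1}` kills every element with trivial vertex signs, since such an
element has order dividing the odd number `pq`; as `ξ_Γ` has the homomorphic section
`signLift`, `ψ` factors through `ξ_Γ`. Openness of `ker ψ` makes the induced character of
`C_2^V` trivial on sign vectors supported off a finite vertex set, so it is
`g ↦ ∏_{v ∈ S} g_v` for a finite `S`, nonempty because `ψ` is onto. Both
`⋂_{v ∈ U} ker π_v ⊆ ker ψ` and `ker π_{Γ₀} ⊆ ker ψ` then amount to `S ⊆ U` (resp. `S ⊆ V₀`),
so the vertex width is `|S|`; and the parity condition on `V₀ ⊇ S` forces `V₀ = S`, since the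
sign flip at a vertex of `V₀ \ S` lies in `ker ψ` but has odd parity.
-/

open Topology DihedralGroup

lemma Int.units_pow_of_odd {n : ℕ} (hn : Odd n) (u : ℤˣ) : u ^ n = u := by
  obtain ⟨k, rfl⟩ := hn
  rw [pow_succ, pow_mul, Int.units_sq, one_pow, one_mul]

lemma Int.units_monoidHom_eq_one_or_eq_id (φ : ℤˣ →* ℤˣ) : φ = 1 ∨ φ = MonoidHom.id ℤˣ := by
  have hφ : ∀ u, φ u = if φ (-1) = 1 then 1 else u := by
    intro u
    rcases Int.units_eq_one_or u with rfl | rfl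
    · simp
    · rcases Int.units_eq_one_or (φ (-1)) with h | h <;> simp [h]
  by_cases h : φ (-1) = 1
  · exact Or.inl (MonoidHom.ext fun u => by simp [hφ u, h])
  · exact Or.inr (MonoidHom.ext fun u => by simp [hφ u, h])

@[simp] lemma dihedralSign_sr {n : ℕ} (i : ZMod n) : dihedralSign n (sr i) = -1 := rfl

lemma pow_eq_one_of_dihedralSign_eq_one {n : ℕ} {a : DihedralGroup n}
    (ha : dihedralSign n a = 1) : a ^ n = 1 := by
  cases a with
  | r i => rw [r_pow, ZMod.natCast_self, mul_zero, one_def]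
  | sr i => exact absurd ha (by simp)

def dihedralSignSection (n : ℕ) : ℤˣ →* DihedralGroup n where
  toFun u := if u = 1 then 1 else sr 0
  map_one' := if_pos rfl
  map_mul' u v := by
    rcases Int.units_eq_one_or u with rfl | rfl <;>
      rcases Int.units_eq_one_or v with rfl | rfl <;> simp [sr_mul_sr]

lemma dihedralSign_dihedralSignSection {n : ℕ} (u : ℤˣ) :
    dihedralSign n (dihedralSignSection n u) = u := by
  rcases Int.units_eq_one_or u with rfl | rfl <;> simp [dihedralSignSection]

lemma Wgrp.pow_eq_one_of_lamW_eq_one {p q : ℕ} {b : Wgrp p q} (hb : lamW p q b = 1) :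
    b ^ q = 1 := by
  obtain ⟨c, rfl⟩ : b ∈ (SemidirectProduct.inl : _ →* Wgrp p q).range := by
    rwa [SemidirectProduct.range_inl_eq_ker_rightHom]
  have hc : c ^ q = 1 := Multiplicative.toAdd.injective <| by
    simp [toAdd_pow, nsmul_eq_mul]
  rw [← map_pow, hc, map_one]

lemma exists_finset_forall_eq_prod {ι : Type*} (χ : (ι → ℤˣ) →* ℤˣ) (I : Finset ι)
    (hχ : ∀ g, (∀ i ∈ I, g i = 1) → χ g = 1) : ∃ S : Finset ι, ∀ g, χ g = ∏ i ∈ S, g i := by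
  classical
  let χ_ (i : ι) : ℤˣ →* ℤˣ := χ.comp (MonoidHom.mulSingle (fun _ : ι => ℤˣ) i)
  refine ⟨I.filter fun i => χ_ i (-1) = -1, fun g => ?_⟩
  let h : ι → ℤˣ := ∏ i ∈ I, Pi.mulSingle i (g i)
  have hgh : χ (g * h⁻¹) = 1 := hχ _ fun i hi => by simp [h, Finset.prod_apply, hi]
  calc χ g = χ (g * h⁻¹) * χ h := by rw [← map_mul, inv_mul_cancel_right]
    _ = ∏ i ∈ I, χ_ i (g i) := by rw [hgh, one_mul, map_prod]; rfl
    _ = ∏ i ∈ I, if χ_ i (-1) = -1 then g i else 1 := by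
      refine Finset.prod_congr rfl fun i _ => ?_
      rcases Int.units_monoidHom_eq_one_or_eq_id (χ_ i) with hi | hi <;> simp [hi]
    _ = ∏ i ∈ I.filter fun i => χ_ i (-1) = -1, g i := (Finset.prod_filter _ _).symm

lemma exists_finset_eq_of_mem_nhds_pi {ι : Type*} {X : ι → Type*} [∀ i, TopologicalSpace (X i)]
    [∀ i, DiscreteTopology (X i)] {x₀ : ∀ i, X i} {s : Set (∀ i, X i)} (hs : s ∈ 𝓝 x₀) :
    ∃ I : Finset ι, ∀ x : ∀ i, X i, (∀ i ∈ I, x i = x₀ i) → x ∈ s := by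
  rw [nhds_pi, Filter.mem_pi'] at hs
  obtain ⟨I, t, ht, hts⟩ := hs
  refine ⟨I, fun x hx => hts fun i hi => ?_⟩
  rw [hx i hi]
  exact mem_of_mem_nhds (ht i)

section GGamma

variable {p q : ℕ} {V : Type*} {R : Set (V × V)}

lemma xiGamma_apply (x : GGamma p q V R) (v : V) :
    xiGamma p q V R x v = dihedralSign p (x.1.1 v) := rfl

lemma pow_mul_eq_one_of_xiGamma_eq_one {x : GGamma p q V R} (hx : xiGamma p q V R x = 1) :
    x ^ (p * q) = 1 := by
  have hv (v : V) : x.1.1 v ^ p = 1 :=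
    pow_eq_one_of_dihedralSign_eq_one (congr_fun hx v)
  refine Subtype.ext (Prod.ext (funext fun v => ?_) (funext fun r => ?_))
  · simp [pow_mul, hv]
  · have hr : lamW p q (x.1.2 r ^ p) = 1 := by
      rw [map_pow, x.2 r, Prod.pow_mk, hv, hv, Prod.mk_one_one]
    simp [pow_mul, Wgrp.pow_eq_one_of_lamW_eq_one hr]

lemma ker_xiGamma_le_ker (hpq : Odd (p * q)) (ψ : GGamma p q V R →* ℤˣ) :
    (xiGamma p q V R).ker ≤ ψ.ker := fun x hx => by
  rw [MonoidHom.mem_ker, ← Int.units_pow_of_odd hpq (ψ x), ← map_pow,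
    pow_mul_eq_one_of_xiGamma_eq_one hx, map_one]

variable (p q V R) in
def liftVertices : (V → DihedralGroup p) →* GGamma p q V R :=
  MonoidHom.codRestrict
    ((MonoidHom.id _).prod (MonoidHom.pi fun r : R =>
      SemidirectProduct.inr.comp
        ((Pi.evalMonoidHom _ (r : V × V).1).prod (Pi.evalMonoidHom _ (r : V × V).2))))
    (GGamma p q V R) (fun _ _ => SemidirectProduct.rightHom_inr _)

variable (p q V R) in
def signLift : (V → ℤˣ) →* GGamma p q V R :=
  (liftVertices p q V R).comp ((dihedralSignSection p).compLeft V)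

lemma xiGamma_signLift (g : V → ℤˣ) : xiGamma p q V R (signLift p q V R g) = g :=
  funext fun v => dihedralSign_dihedralSignSection (g v)

lemma xiGamma_surjective : Function.Surjective (xiGamma p q V R) :=
  fun g => ⟨signLift p q V R g, xiGamma_signLift g⟩

lemma mem_ker_projGGamma_iff {V0 : Set V} {x : GGamma p q V R} :
    x ∈ (projGGamma p q V R V0).ker ↔
      (∀ v ∈ V0, x.1.1 v = 1) ∧
        ∀ r : R, (r : V × V).1 ∈ V0 → (r : V × V).2 ∈ V0 → x.1.2 r = 1 := by
  rw [MonoidHom.mem_ker, Subtype.ext_iff, Prod.ext_iff, funext_iff, funext_iff]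
  constructor
  · rintro ⟨hv, he⟩
    exact ⟨fun v hv' => hv ⟨v, hv'⟩, fun r h1 h2 => he ⟨(⟨_, h1⟩, ⟨_, h2⟩), r.2⟩⟩
  · rintro ⟨hv, he⟩
    exact ⟨fun v => hv v v.2, fun e => he _ e.1.1.2 e.1.2.2⟩

lemma signLift_mem_ker_projGGamma {V0 : Set V} {g : V → ℤˣ} (hg : ∀ v ∈ V0, g v = 1) :
    signLift p q V R g ∈ (projGGamma p q V R V0).ker := by
  have hv : ∀ v ∈ V0, (signLift p q V R g).1.1 v = 1 := fun v hv =>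
    (congrArg (dihedralSignSection p) (hg v hv)).trans (map_one _)
  refine mem_ker_projGGamma_iff.2 ⟨hv, fun r h1 h2 => ?_⟩
  show SemidirectProduct.inr
    ((signLift p q V R g).1.1 (r : V × V).1, (signLift p q V R g).1.1 (r : V × V).2) = 1
  rw [hv _ h1, hv _ h2, Prod.mk_one_one, map_one]

lemma projGGamma_surjective (V0 : Set V) : Function.Surjective (projGGamma p q V R V0) := by
  classical
  intro y
  let a : V → DihedralGroup p := fun v => if h : v ∈ V0 then y.1.1 ⟨v, h⟩ else 1
  let b : R → Wgrp p q := fun r =>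
    if h : (r : V × V).1 ∈ V0 ∧ (r : V × V).2 ∈ V0 then y.1.2 ⟨(⟨_, h.1⟩, ⟨_, h.2⟩), r.2⟩
    else SemidirectProduct.inr (a (r : V × V).1, a (r : V × V).2)
  have hab : (a, b) ∈ GGamma p q V R := by
    intro r
    by_cases h : (r : V × V).1 ∈ V0 ∧ (r : V × V).2 ∈ V0
    · simp only [a, b, dif_pos h, dif_pos h.1, dif_pos h.2]
      exact y.2 _
    · simp only [b, dif_neg h]
      exact SemidirectProduct.rightHom_inr _
  refine ⟨⟨(a, b), hab⟩, Subtype.ext (Prod.ext (funext fun v => ?_) (funext fun e => ?_))⟩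
  · exact dif_pos v.2
  · show b _ = _
    simp only [b]
    rw [dif_pos ⟨e.1.1.2, e.1.2.2⟩]

lemma exists_finset_ker_projGGamma_le {N : Subgroup (GGamma p q V R)}
    (hN : IsOpen (N : Set (GGamma p q V R))) :
    ∃ V1 : Finset V, (projGGamma p q V R V1).ker ≤ N := by
  classical
  have hN1 := hN.mem_nhds N.one_mem
  rw [nhds_subtype, Filter.mem_comap] at hN1
  obtain ⟨t, ht, htN⟩ := hN1
  obtain ⟨u, hu, w, hw, huw⟩ := mem_nhds_prod_iff.1 ht
  obtain ⟨I, hI⟩ := exists_finset_eq_of_mem_nhds_pi hu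
  obtain ⟨J, hJ⟩ := exists_finset_eq_of_mem_nhds_pi hw
  refine ⟨I ∪ J.image (fun r : R => (r : V × V).1) ∪ J.image (fun r : R => (r : V × V).2),
    fun x hx => htN (huw ⟨hI _ fun v hv => ?_, hJ _ fun r hr => ?_⟩)⟩
  · exact (mem_ker_projGGamma_iff.1 hx).1 v (by simp [hv])
  · exact (mem_ker_projGGamma_iff.1 hx).2 r
      (Finset.mem_union_left _ (Finset.mem_union_right _ (Finset.mem_image_of_mem _ hr)))
      (Finset.mem_union_right _ (Finset.mem_image_of_mem _ hr))

lemma exists_finset_forall_eq_prod_xiGamma (hpq : Odd (p * q)) (ψ : GGamma p q V R →* ℤˣ)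
    (hψ : IsOpen (ψ.ker : Set (GGamma p q V R))) :
    ∃ S : Finset V, ∀ x, ψ x = ∏ v ∈ S, xiGamma p q V R x v := by
  obtain ⟨V1, hV1⟩ := exists_finset_ker_projGGamma_le hψ
  have hfactor (x : GGamma p q V R) : ψ x = ψ (signLift p q V R (xiGamma p q V R x)) := by
    have hx : x * (signLift p q V R (xiGamma p q V R x))⁻¹ ∈ (xiGamma p q V R).ker := by
      rw [MonoidHom.mem_ker, map_mul, map_inv, xiGamma_signLift, mul_inv_cancel]
    rw [← mul_inv_eq_one, ← map_inv, ← map_mul]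
    exact ker_xiGamma_le_ker hpq ψ hx
  obtain ⟨S, hS⟩ := exists_finset_forall_eq_prod (ψ.comp (signLift p q V R)) V1
    fun g hg => hV1 (signLift_mem_ker_projGGamma hg)
  exact ⟨S, fun x => (hfactor x).trans (hS _)⟩

variable {ψ : GGamma p q V R →* ℤˣ} {S : Finset V}

lemma map_signLift_mulSingle [DecidableEq V] (hS : ∀ x, ψ x = ∏ v ∈ S, xiGamma p q V R x v)
    (s : V) : ψ (signLift p q V R (Pi.mulSingle s (-1 : ℤˣ))) = if s ∈ S then -1 else 1 := by
  rw [hS, xiGamma_signLift, Finset.prod_pi_mulSingle']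

lemma le_ker_iff_subset [DecidableEq V] (hS : ∀ x, ψ x = ∏ v ∈ S, xiGamma p q V R x v)
    {K : Subgroup (GGamma p q V R)} {U : Finset V}
    (hK : ∀ x ∈ K, ∀ v ∈ U, x.1.1 v = 1)
    (hKU : ∀ s ∉ U, signLift p q V R (Pi.mulSingle s (-1 : ℤˣ)) ∈ K) :
    K ≤ ψ.ker ↔ S ⊆ U := by
  refine ⟨fun hle s hs => by_contra fun hsU => ?_, fun hSU x hx => ?_⟩
  · have := hle (hKU s hsU)
    rw [MonoidHom.mem_ker, map_signLift_mulSingle hS, if_pos hs] at this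
    exact absurd this (by decide)
  · rw [MonoidHom.mem_ker, hS]
    exact Finset.prod_eq_one fun v hv => by rw [xiGamma_apply, hK x hx v (hSU hv), map_one]

lemma iInf_ker_vProj_le_iff [DecidableEq V] (hS : ∀ x, ψ x = ∏ v ∈ S, xiGamma p q V R x v)
    (U : Finset V) :
    ⨅ v ∈ U, (vProj p q V R v).ker ≤ ψ.ker ↔ S ⊆ U := by
  refine le_ker_iff_subset hS (fun x hx v hv => ?_) fun s hs => ?_
  · exact Subgroup.mem_iInf.1 (Subgroup.mem_iInf.1 hx v) hv
  · simp only [Subgroup.mem_iInf, MonoidHom.mem_ker]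
    intro v hv
    show dihedralSignSection p ((Pi.mulSingle s (-1 : ℤˣ) : V → ℤˣ) v) = 1
    rw [Pi.mulSingle_eq_of_ne (ne_of_mem_of_not_mem hv hs), map_one]

lemma ker_projGGamma_le_iff [DecidableEq V] (hS : ∀ x, ψ x = ∏ v ∈ S, xiGamma p q V R x v)
    (V0 : Finset V) :
    (projGGamma p q V R V0).ker ≤ ψ.ker ↔ S ⊆ V0 := by
  refine le_ker_iff_subset hS (fun x hx => (mem_ker_projGGamma_iff.1 hx).1) fun s hs => ?_
  exact signLift_mem_ker_projGGamma fun v hv =>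
    Pi.mulSingle_eq_of_ne (ne_of_mem_of_not_mem hv hs) _

lemma prod_xiGamma_projGGamma (x : GGamma p q V R) (V0 : Finset V) :
    ∏ v : (V0 : Set V), xiGamma p q _ (inducedR V R V0) (projGGamma p q V R V0 x) v =
      ∏ v ∈ V0, xiGamma p q V R x v :=
  Finset.prod_coe_sort V0 (xiGamma p q V R x)

lemma nonempty_of_surjective (hS : ∀ x, ψ x = ∏ v ∈ S, xiGamma p q V R x v)
    (hψ : Function.Surjective ψ) : S.Nonempty := by
  obtain ⟨x, hx⟩ := hψ (-1)
  refine Finset.nonempty_iff_ne_empty.2 fun hS0 => ?_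
  rw [hS, hS0, Finset.prod_empty] at hx
  exact absurd hx (by decide)

lemma isLeast_card [DecidableEq V] (hS : ∀ x, ψ x = ∏ v ∈ S, xiGamma p q V R x v)
    (hne : S.Nonempty) :
    IsLeast {m : ℕ | 1 ≤ m ∧ ∃ U : Finset V, U.card = m ∧
      (⨅ v ∈ U, (vProj p q V R v).ker) ≤ ψ.ker} S.card := by
  refine ⟨⟨hne.card_pos, S, rfl, (iInf_ker_vProj_le_iff hS S).2 subset_rfl⟩, ?_⟩
  rintro m ⟨-, U, rfl, hU⟩
  exact Finset.card_le_card ((iInf_ker_vProj_le_iff hS U).1 hU)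

lemma mem_map_ker_projGGamma_iff (hS : ∀ x, ψ x = ∏ v ∈ S, xiGamma p q V R x v)
    (y : GGamma p q (S : Set V) (inducedR V R S)) :
    y ∈ ψ.ker.map (projGGamma p q V R S) ↔ ∏ v, xiGamma p q _ _ y v = 1 := by
  constructor
  · rintro ⟨x, hx, rfl⟩
    rwa [prod_xiGamma_projGGamma, ← hS]
  · intro hy
    obtain ⟨x, rfl⟩ := projGGamma_surjective (S : Set V) y
    refine ⟨x, MonoidHom.mem_ker.2 ?_, rfl⟩
    rwa [hS, ← prod_xiGamma_projGGamma]

lemma subset_of_forall_mem_map_iff [DecidableEq V]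
    (hS : ∀ x, ψ x = ∏ v ∈ S, xiGamma p q V R x v) {V0 : Finset V}
    (hV0 : ∀ g : ↥(V0 : Set V) → ℤˣ,
      g ∈ (ψ.ker.map (projGGamma p q V R V0)).map (xiGamma p q _ (inducedR V R V0)) ↔
        ∏ v, g v = 1) :
    V0 ⊆ S := by
  intro w hw
  by_contra hwS
  let x := signLift p q V R (Pi.mulSingle w (-1 : ℤˣ))
  have hx : x ∈ ψ.ker := by rw [MonoidHom.mem_ker, map_signLift_mulSingle hS, if_neg hwS]
  have := (hV0 _).1 ⟨_, ⟨x, hx, rfl⟩, rfl⟩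
  rw [prod_xiGamma_projGGamma, xiGamma_signLift, Finset.prod_pi_mulSingle', if_pos hw] at this
  exact absurd this (by decide)

end GGamma

theorem statement_18_general (p q : ℕ) (hpo : Odd p) (hqo : Odd q)
    (V : Type) (R : Set (V × V))
    (N : Subgroup ↥(GGamma p q V R))
    (hNo : IsOpen (N : Set ↥(GGamma p q V R)))
    (hC2 : ∃ ψ : ↥(GGamma p q V R) →* ℤˣ, Function.Surjective ψ ∧ ψ.ker = N)
    (n : ℕ) :
    IsLeast {m : ℕ | 1 ≤ m ∧ ∃ U : Finset V, U.card = m ∧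
        (⨅ v ∈ U, (vProj p q V R v).ker) ≤ N} n ↔
      ∃ V0 : Finset V, V0.card = n ∧
        (projGGamma p q V R (↑V0 : Set V)).ker ≤ N ∧
        (N.map (projGGamma p q V R (↑V0 : Set V))).Normal ∧
        (xiGamma p q ↥(↑V0 : Set V) (inducedR V R (↑V0 : Set V))).ker ≤
          N.map (projGGamma p q V R (↑V0 : Set V)) ∧
        ∀ g : ↥(↑V0 : Set V) → ℤˣ,
          g ∈ (N.map (projGGamma p q V R (↑V0 : Set V))).map
              (xiGamma p q ↥(↑V0 : Set V) (inducedR V R (↑V0 : Set V))) ↔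
            ∏ v : ↥(↑V0 : Set V), g v = 1 := by
  classical
  obtain ⟨ψ, hψ, rfl⟩ := hC2
  obtain ⟨S, hS⟩ := exists_finset_forall_eq_prod_xiGamma (hpo.mul hqo) ψ hNo
  have hleast := isLeast_card hS (nonempty_of_surjective hS hψ)
  constructor
  · intro hn
    obtain rfl := hn.unique hleast
    refine ⟨S, rfl, (ker_projGGamma_le_iff hS S).2 subset_rfl,
      ψ.normal_ker.map _ (projGGamma_surjective _),
      fun y hy => (mem_map_ker_projGGamma_iff hS y).2 ?_, fun g => ⟨?_, fun hg => ?_⟩⟩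
    · exact Finset.prod_eq_one fun v _ => congr_fun (MonoidHom.mem_ker.1 hy) v
    · rintro ⟨y, hy, rfl⟩
      exact (mem_map_ker_projGGamma_iff hS y).1 hy
    · obtain ⟨y, rfl⟩ := xiGamma_surjective (p := p) (q := q) (R := inducedR V R S) g
      exact ⟨y, (mem_map_ker_projGGamma_iff hS y).2 hg, rfl⟩
  · rintro ⟨V0, rfl, hker, -, -, hV0⟩
    rwa [Finset.Subset.antisymm (subset_of_forall_mem_map_iff hS hV0)
      ((ker_projGGamma_le_iff hS V0).1 hker)]

/-- Let `Γ = (V, R)` be an infinite graph and `N` an open normal subgroup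
of `G_Γ` with `G_Γ/N ≅ C_2`.  Then `N` has vertex width `n` (i.e. `n` is the least `m ≥ 1`
with `⋂_{v ∈ U} ker π_v ⊆ N` for some `m`-element `U ⊆ V`) if and only if there is an
induced subgraph `Γ₀` on an `n`-element vertex set `V₀` such that `N ⊇ ker π_{Γ₀}` and the
image `N̄ = π_{Γ₀}(N)` — a normal subgroup of `G_{Γ₀}` containing the product
`P = ker ξ_{Γ₀}` of the `p`- and `q`-Sylow subgroups — satisfies that `ξ_{Γ₀}(N̄)` is
exactly the even-parity subgroup `{g ∈ C_2^{V₀} : #{v : g v = -1} even}`. -/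
theorem statement_18 (p q : ℕ) (hp : p.Prime) (hq : q.Prime) (hpo : Odd p) (hqo : Odd q)
    (hpq : p ≠ q) (V : Type) [Infinite V] (R : Set (V × V))
    (hloop : ∀ v : V, (v, v) ∉ R) (hor : ∀ a b : V, (a, b) ∈ R → (b, a) ∉ R)
    (N : Subgroup ↥(GGamma p q V R)) [N.Normal]
    (hNo : IsOpen (N : Set ↥(GGamma p q V R)))
    (hC2 : ∃ ψ : ↥(GGamma p q V R) →* ℤˣ, Function.Surjective ψ ∧ ψ.ker = N)
    (n : ℕ) :
    IsLeast {m : ℕ | 1 ≤ m ∧ ∃ U : Finset V, U.card = m ∧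
        (⨅ v ∈ U, (vProj p q V R v).ker) ≤ N} n ↔
      ∃ V0 : Finset V, V0.card = n ∧
        (projGGamma p q V R (↑V0 : Set V)).ker ≤ N ∧
        (N.map (projGGamma p q V R (↑V0 : Set V))).Normal ∧
        (xiGamma p q ↥(↑V0 : Set V) (inducedR V R (↑V0 : Set V))).ker ≤
          N.map (projGGamma p q V R (↑V0 : Set V)) ∧
        ∀ g : ↥(↑V0 : Set V) → ℤˣ,
          g ∈ (N.map (projGGamma p q V R (↑V0 : Set V))).map
              (xiGamma p q ↥(↑V0 : Set V) (inducedR V R (↑V0 : Set V))) ↔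
            ∏ v : ↥(↑V0 : Set V), g v = 1 :=
  statement_18_general p q hpo hqo V R N hNo hC2 n
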